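/- arXiv:1804.06933 — 3 statements merged into one kernel-verified Lean document; each statement's English description precedes it below -/
import Mathlib

section
/- Let A be a DLCMI, a,b ∈ A, and suppose tₙᵏ(a,b) ≤ c↔d, tₙᵏ(a,b) ≤ u↔w, tₙᵏ(a,b)·(c∨a∨b) ≤ d∨a∨b, and tₙᵏ(a,b)·(u∨a∨b) ≤ w∨a∨b. Then tₙ²ᵏ(a,b)·((c·u)∨a∨b) ≤ (d·w)∨a∨b and tₙ²ᵏ(a,b) ≤ (c·u)↔(d·w). -/
/-!
Write `e = a ⊔ b` and `t = tₙᵏ(a,b)`; since `t^(2k) = t * t`, both claims come from multiplying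
the two hypotheses of each kind. Multiplication distributes over joins, hence is monotone, and
everything lies below `1`, hence `x * y ≤ x`; together these give `(d ⊔ e) * (w ⊔ e) ≤ d * w ⊔ e`.
For the biconditional, `(c → d) * (u → w) ≤ (c * u → d * u) * (d * u → d * w) ≤ (c * u → d * w)`.
-/

def boxIter {α : Type*} [One α] (imp : α → α → α) : ℕ → α → α
  | 0, x => x
  | n + 1, x => imp 1 (boxIter imp n x)

def biimp {α : Type*} [SemilatticeInf α] (imp : α → α → α) (x y : α) : α :=
  imp x y ⊓ imp y x

def tt {α : Type*} [SemilatticeInf α] [One α] (imp : α → α → α) : ℕ → α → α → α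
  | 0, a, b => biimp imp a b
  | n + 1, a, b => tt imp n a b ⊓ boxIter imp (n + 1) (biimp imp a b)

section IntegralLatticeMonoid

variable {α : Type*} [CommMonoid α]

theorem mul_le_mul_of_sup_mul_distrib [SemilatticeSup α]
    (hdist : ∀ a b c : α, (a ⊔ b) * c = a * c ⊔ b * c)
    {x y z v : α} (hxy : x ≤ y) (hzv : z ≤ v) : x * z ≤ y * v := by
  have mul_le_mul_right : ∀ {p q : α} (r : α), p ≤ q → p * r ≤ q * r := fun r hpq =>
    calc _ ≤ _ * r ⊔ _ * r := le_sup_left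
      _ = _ := by rw [← hdist, sup_eq_right.mpr hpq]
  calc x * z ≤ y * z := mul_le_mul_right z hxy
    _ = z * y := mul_comm y z
    _ ≤ v * y := mul_le_mul_right y hzv
    _ = y * v := mul_comm v y

theorem mul_le_left_of_le_one [SemilatticeSup α]
    (hdist : ∀ a b c : α, (a ⊔ b) * c = a * c ⊔ b * c) (hle_one : ∀ a : α, a ≤ 1)
    (x y : α) : x * y ≤ x :=
  (mul_le_mul_of_sup_mul_distrib hdist le_rfl (hle_one y)).trans_eq (mul_one x)

theorem sup_mul_sup_le_mul_sup [SemilatticeSup α]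
    (hdist : ∀ a b c : α, (a ⊔ b) * c = a * c ⊔ b * c) (hle_one : ∀ a : α, a ≤ 1)
    (x y e : α) : (x ⊔ e) * (y ⊔ e) ≤ x * y ⊔ e := by
  rw [hdist, mul_comm x (y ⊔ e), hdist, mul_comm y x]
  exact sup_le (sup_le le_sup_left ((mul_le_left_of_le_one hdist hle_one e x).trans le_sup_right))
    ((mul_le_left_of_le_one hdist hle_one e _).trans le_sup_right)

theorem mul_mul_mul_sup_le [SemilatticeSup α]
    (hdist : ∀ a b c : α, (a ⊔ b) * c = a * c ⊔ b * c) (hle_one : ∀ a : α, a ≤ 1)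
    {s t c d u w e : α} (hc : s * (c ⊔ e) ≤ d ⊔ e) (hu : t * (u ⊔ e) ≤ w ⊔ e) :
    s * t * (c * u ⊔ e) ≤ d * w ⊔ e := by
  have hsc : s * c ≤ d ⊔ e := (mul_le_mul_of_sup_mul_distrib hdist le_rfl le_sup_left).trans hc
  have htu : t * u ≤ w ⊔ e := (mul_le_mul_of_sup_mul_distrib hdist le_rfl le_sup_left).trans hu
  rw [mul_comm _ (c * u ⊔ e), hdist]
  refine sup_le ?_ ((mul_le_left_of_le_one hdist hle_one e _).trans le_sup_right)
  calc c * u * (s * t) = s * c * (t * u) := by ac_rfl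
    _ ≤ (d ⊔ e) * (w ⊔ e) := mul_le_mul_of_sup_mul_distrib hdist hsc htu
    _ ≤ d * w ⊔ e := sup_mul_sup_le_mul_sup hdist hle_one d w e

theorem imp_mul_imp_le_imp_mul [SemilatticeSup α] {imp : α → α → α}
    (hdist : ∀ a b c : α, (a ⊔ b) * c = a * c ⊔ b * c)
    (htrans : ∀ a b c : α, imp a b * imp b c ≤ imp a c)
    (hmul : ∀ a b c : α, imp a b ≤ imp (a * c) (b * c)) (c d u w : α) :
    imp c d * imp u w ≤ imp (c * u) (d * w) :=
  calc imp c d * imp u w ≤ imp (c * u) (d * u) * imp (d * u) (d * w) :=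
        mul_le_mul_of_sup_mul_distrib hdist (hmul c d u)
          (by rw [mul_comm d u, mul_comm d w]; exact hmul u w d)
    _ ≤ imp (c * u) (d * w) := htrans _ _ _

theorem biimp_mul_biimp_le_biimp_mul [Lattice α] {imp : α → α → α}
    (hdist : ∀ a b c : α, (a ⊔ b) * c = a * c ⊔ b * c)
    (htrans : ∀ a b c : α, imp a b * imp b c ≤ imp a c)
    (hmul : ∀ a b c : α, imp a b ≤ imp (a * c) (b * c)) (c d u w : α) :
    biimp imp c d * biimp imp u w ≤ biimp imp (c * u) (d * w) :=
  le_inf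
    ((mul_le_mul_of_sup_mul_distrib hdist inf_le_left inf_le_left).trans
      (imp_mul_imp_le_imp_mul hdist htrans hmul c d u w))
    ((mul_le_mul_of_sup_mul_distrib hdist inf_le_right inf_le_right).trans
      (imp_mul_imp_le_imp_mul hdist htrans hmul d c w u))

end IntegralLatticeMonoid

theorem dlcmi_mul_compat_general {α : Type*} [DistribLattice α] [CommMonoid α]
    (htop : ∀ a : α, a ≤ 1)
    (imp : α → α → α)
    (h7 : ∀ a b c : α, (a ⊔ b) * c = a * c ⊔ b * c)
    (h8 : ∀ a b c : α, imp a b * imp b c ≤ imp a c)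
    (h9 : ∀ a b c : α, imp a b ≤ imp (a * c) (b * c))
    (a b c d u w : α) (n k : ℕ)
    (hcd : (tt imp n a b) ^ k ≤ biimp imp c d)
    (huw : (tt imp n a b) ^ k ≤ biimp imp u w)
    (hcj : (tt imp n a b) ^ k * (c ⊔ a ⊔ b) ≤ d ⊔ a ⊔ b)
    (huj : (tt imp n a b) ^ k * (u ⊔ a ⊔ b) ≤ w ⊔ a ⊔ b) :
    (tt imp n a b) ^ (2 * k) * ((c * u) ⊔ a ⊔ b) ≤ (d * w) ⊔ a ⊔ b ∧
    (tt imp n a b) ^ (2 * k) ≤ biimp imp (c * u) (d * w) := by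
  rw [two_mul, pow_add]
  constructor
  · simp only [sup_assoc] at hcj huj ⊢
    exact mul_mul_mul_sup_le h7 htop hcj huj
  · exact (mul_le_mul_of_sup_mul_distrib h7 hcd huw).trans
      (biimp_mul_biimp_le_biimp_mul h7 h8 h9 c d u w)

theorem dlcmi_mul_compat {α : Type*} [DistribLattice α] [CommMonoid α]
    (htop : ∀ a : α, a ≤ 1)
    (imp : α → α → α)
    (h4 : ∀ a b c : α, imp a b ⊓ imp a c = imp a (b ⊓ c))
    (h5 : ∀ a b c : α, imp a c ⊓ imp b c = imp (a ⊔ b) c)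
    (h6 : ∀ a : α, imp a a = 1)
    (h7 : ∀ a b c : α, (a ⊔ b) * c = a * c ⊔ b * c)
    (h8 : ∀ a b c : α, imp a b * imp b c ≤ imp a c)
    (h9 : ∀ a b c : α, imp a b ≤ imp (a * c) (b * c))
    (a b c d u w : α) (n k : ℕ)
    (hcd : (tt imp n a b) ^ k ≤ biimp imp c d)
    (huw : (tt imp n a b) ^ k ≤ biimp imp u w)
    (hcj : (tt imp n a b) ^ k * (c ⊔ a ⊔ b) ≤ d ⊔ a ⊔ b)
    (huj : (tt imp n a b) ^ k * (u ⊔ a ⊔ b) ≤ w ⊔ a ⊔ b) :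
    (tt imp n a b) ^ (2 * k) * ((c * u) ⊔ a ⊔ b) ≤ (d * w) ⊔ a ⊔ b ∧
    (tt imp n a b) ^ (2 * k) ≤ biimp imp (c * u) (d * w) :=
  dlcmi_mul_compat_general htop imp h7 h8 h9 a b c d u w n k hcd huw hcj huj
end

section
/- Let A be a DLCMI, a,b ∈ A, and suppose tₙᵏ(a,b) ≤ c↔d and tₙᵏ(a,b) ≤ u↔w. Then t_{n+1}²ᵏ(a,b) ≤ (c→u)↔(d→w). -/
theorem mulLeftMono_of_sup_mul {α : Type*} [SemilatticeSup α] [CommMonoid α]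
    (h : ∀ a b c : α, (a ⊔ b) * c = a * c ⊔ b * c) : MulLeftMono α where
  elim c a b hab := by
    simp only [mul_comm c]
    calc a * c ≤ a * c ⊔ b * c := le_sup_left
      _ = b * c := by rw [← h, sup_eq_right.mpr hab]

section Implication

variable {α : Type*} (imp : α → α → α)

theorem imp_mono_right [SemilatticeInf α]
    (h4 : ∀ a b c : α, imp a b ⊓ imp a c = imp a (b ⊓ c)) {x y z : α} (hyz : y ≤ z) :
    imp x y ≤ imp x z := by
  rw [← inf_eq_left.mpr hyz, ← h4]
  exact inf_le_right

theorem tt_succ_le_box [SemilatticeInf α] [One α]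
    (h4 : ∀ a b c : α, imp a b ⊓ imp a c = imp a (b ⊓ c)) (a b : α) (n : ℕ) :
    tt imp (n + 1) a b ≤ imp 1 (tt imp n a b) := by
  induction n with
  | zero => exact inf_le_right
  | succ n ih =>
    change _ ≤ imp 1 (tt imp n a b ⊓ boxIter imp (n + 1) (biimp imp a b))
    rw [← h4]
    exact le_inf (inf_le_left.trans ih) inf_le_right

theorem box_le_imp_mul [MulOneClass α] [LE α]
    (h9 : ∀ a b c : α, imp a b ≤ imp (a * c) (b * c)) (x y : α) :
    imp 1 x ≤ imp y (x * y) := by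
  simpa only [one_mul] using h9 1 x y

variable [CommMonoid α] [Preorder α] [MulLeftMono α]
  (h8 : ∀ a b c : α, imp a b * imp b c ≤ imp a c)
  (h9 : ∀ a b c : α, imp a b ≤ imp (a * c) (b * c))
include h8 h9

theorem box_mul_le_box_mul (x y : α) : imp 1 x * imp 1 y ≤ imp 1 (x * y) :=
  calc imp 1 x * imp 1 y ≤ imp 1 x * imp x (x * y) := by
        rw [mul_comm x y]
        exact mul_le_mul_right (box_le_imp_mul imp h9 y x) _
    _ ≤ imp 1 (x * y) := h8 1 x (x * y)

theorem box_pow_le_box_pow (h6 : imp 1 1 = 1) (x : α) (m : ℕ) :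
    imp 1 x ^ m ≤ imp 1 (x ^ m) := by
  induction m with
  | zero => simp only [pow_zero, h6, le_refl]
  | succ m ih =>
    calc imp 1 x ^ (m + 1) ≤ imp 1 (x ^ m) * imp 1 x := by
          rw [pow_succ]
          exact mul_le_mul_left ih _
      _ ≤ imp 1 (x ^ (m + 1)) := by
          rw [pow_succ]
          exact box_mul_le_box_mul imp h8 h9 _ _

omit h9 in
theorem imp_mul_imp_mul_imp_le (a b c d : α) :
    imp a b * imp b c * imp c d ≤ imp a d :=
  calc imp a b * imp b c * imp c d ≤ imp a c * imp c d := mul_le_mul_left (h8 a b c) _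
    _ ≤ imp a d := h8 a c d

end Implication

theorem box_mul_le_imp_imp {α : Type*} [CommMonoid α] [SemilatticeInf α] [MulLeftMono α]
    (imp : α → α → α) (h4 : ∀ a b c : α, imp a b ⊓ imp a c = imp a (b ⊓ c))
    (h8 : ∀ a b c : α, imp a b * imp b c ≤ imp a c)
    (h9 : ∀ a b c : α, imp a b ≤ imp (a * c) (b * c))
    {s s' c d u w : α}
    (hdc : s ≤ imp d c) (huw : s' ≤ imp u w) :
    imp 1 (s * s') ≤ imp (imp c u) (imp d w) := by
  refine (box_le_imp_mul imp h9 _ (imp c u)).trans (imp_mono_right imp h4 ?_)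
  calc s * s' * imp c u ≤ imp d c * imp u w * imp c u :=
        mul_le_mul_left (mul_le_mul' hdc huw) _
    _ = imp d c * imp c u * imp u w := mul_right_comm _ _ _
    _ ≤ imp d w := imp_mul_imp_mul_imp_le imp h8 d c u w

theorem dlcmi_imp_compat_biimp_general {α : Type*} [DistribLattice α] [CommMonoid α]
    (imp : α → α → α)
    (h4 : ∀ a b c : α, imp a b ⊓ imp a c = imp a (b ⊓ c))
    (h6 : ∀ a : α, imp a a = 1)
    (h7 : ∀ a b c : α, (a ⊔ b) * c = a * c ⊔ b * c)
    (h8 : ∀ a b c : α, imp a b * imp b c ≤ imp a c)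
    (h9 : ∀ a b c : α, imp a b ≤ imp (a * c) (b * c))
    (a b c d u w : α) (n k : ℕ)
    (hcd : (tt imp n a b) ^ k ≤ biimp imp c d)
    (huw : (tt imp n a b) ^ k ≤ biimp imp u w) :
    (tt imp (n + 1) a b) ^ (2 * k) ≤ biimp imp (imp c u) (imp d w) := by
  have := mulLeftMono_of_sup_mul h7
  set t := tt imp n a b
  calc tt imp (n + 1) a b ^ (2 * k) ≤ imp 1 t ^ (2 * k) :=
        pow_le_pow_left' (tt_succ_le_box imp h4 a b n) _
    _ ≤ imp 1 (t ^ k * t ^ k) := by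
        rw [← pow_add, ← two_mul]
        exact box_pow_le_box_pow imp h8 h9 (h6 1) t _
    _ ≤ biimp imp (imp c u) (imp d w) :=
        le_inf (box_mul_le_imp_imp imp h4 h8 h9 (hcd.trans inf_le_right) (huw.trans inf_le_left))
          (box_mul_le_imp_imp imp h4 h8 h9 (hcd.trans inf_le_left) (huw.trans inf_le_right))

theorem dlcmi_imp_compat_biimp {α : Type*} [DistribLattice α] [CommMonoid α]
    (htop : ∀ a : α, a ≤ 1)
    (imp : α → α → α)
    (h4 : ∀ a b c : α, imp a b ⊓ imp a c = imp a (b ⊓ c))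
    (h5 : ∀ a b c : α, imp a c ⊓ imp b c = imp (a ⊔ b) c)
    (h6 : ∀ a : α, imp a a = 1)
    (h7 : ∀ a b c : α, (a ⊔ b) * c = a * c ⊔ b * c)
    (h8 : ∀ a b c : α, imp a b * imp b c ≤ imp a c)
    (h9 : ∀ a b c : α, imp a b ≤ imp (a * c) (b * c))
    (a b c d u w : α) (n k : ℕ)
    (hcd : (tt imp n a b) ^ k ≤ biimp imp c d)
    (huw : (tt imp n a b) ^ k ≤ biimp imp u w) :
    (tt imp (n + 1) a b) ^ (2 * k) ≤ biimp imp (imp c u) (imp d w) :=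
  dlcmi_imp_compat_biimp_general imp h4 h6 h7 h8 h9 a b c d u w n k hcd huw
end

section
/- Let A be an integral distributive commutative residuated lattice and a,b,c,d ∈ A. Then (c,d) ∈ θ(a,b) if and only if there exists a natural number k such that (a↔b)ᵏ ≤ c↔d. -/
def IsCong {α : Type*} [Lattice α] [Mul α] (imp : α → α → α) (r : α → α → Prop) : Prop :=
  Equivalence r ∧ (∀ a b c : α, r a b → r (a ⊓ c) (b ⊓ c)) ∧
    (∀ a b c : α, r a b → r (a ⊔ c) (b ⊔ c)) ∧
    (∀ a b c : α, r a b → r (a * c) (b * c)) ∧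
    (∀ a b c : α, r a b → r (imp a c) (imp b c)) ∧
    (∀ a b c : α, r a b → r (imp c a) (imp c b))

def IsResiduation {α : Type*} [LE α] [Mul α] (imp : α → α → α) : Prop :=
  ∀ a b c : α, a * b ≤ c ↔ a ≤ imp b c

section Biimp

variable {α : Type*} [SemilatticeInf α] {imp : α → α → α}

theorem biimp_comm (x y : α) : biimp imp x y = biimp imp y x := inf_comm _ _

theorem biimp_le_biimp_of_imp_le {f : α → α} (hf : ∀ x y, imp x y ≤ imp (f x) (f y))
    (x y : α) : biimp imp x y ≤ biimp imp (f x) (f y) :=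
  le_inf (inf_le_left.trans (hf x y)) (inf_le_right.trans (hf y x))

theorem biimp_le_biimp_of_imp_le_swap {f : α → α} (hf : ∀ x y, imp x y ≤ imp (f y) (f x))
    (x y : α) : biimp imp x y ≤ biimp imp (f x) (f y) :=
  le_inf (inf_le_right.trans (hf y x)) (inf_le_left.trans (hf x y))

end Biimp

namespace IsResiduation

variable {α : Type*} [Lattice α] [CommMonoid α] {imp : α → α → α} (h : IsResiduation imp)
include h

theorem imp_mul_le (x y : α) : imp x y * x ≤ y := (h _ _ _).mpr le_rfl

theorem one_le_imp {x y : α} (hxy : x ≤ y) : 1 ≤ imp x y := (h 1 x y).mp (by rwa [one_mul])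

theorem mul_le_mul_right {x y : α} (hxy : x ≤ y) (z : α) : x * z ≤ y * z :=
  (h _ _ _).mpr (hxy.trans ((h _ _ _).mp le_rfl))

theorem mul_le_mul {x y u v : α} (hxy : x ≤ y) (huv : u ≤ v) : x * u ≤ y * v :=
  calc x * u ≤ y * u := h.mul_le_mul_right hxy u
    _ = u * y := mul_comm _ _
    _ ≤ v * y := h.mul_le_mul_right huv y
    _ = y * v := mul_comm _ _

theorem mul_le_right (htop : ∀ a : α, a ≤ 1) (x z : α) : x * z ≤ z := by
  simpa using h.mul_le_mul (htop x) (le_refl z)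

theorem mul_sup_le (u x z : α) : u * (x ⊔ z) ≤ u * x ⊔ u * z := by
  rw [mul_comm]
  refine (h _ _ _).mpr (sup_le ?_ ?_)
  · exact (h _ _ _).mp (by rw [mul_comm]; exact le_sup_left)
  · exact (h _ _ _).mp (by rw [mul_comm]; exact le_sup_right)

theorem imp_self_eq_one (htop : ∀ a : α, a ≤ 1) (x : α) : imp x x = 1 :=
  le_antisymm (htop _) (h.one_le_imp le_rfl)

theorem imp_mul_imp_le (x y z : α) : imp x y * imp y z ≤ imp x z := by
  refine (h _ _ _).mp ?_
  calc imp x y * imp y z * x = imp y z * (imp x y * x) := by rw [mul_comm (imp x y), mul_assoc]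
    _ ≤ imp y z * y := h.mul_le_mul le_rfl (h.imp_mul_le x y)
    _ ≤ z := h.imp_mul_le y z

theorem imp_le_imp_inf (htop : ∀ a : α, a ≤ 1) (x y z : α) :
    imp x y ≤ imp (x ⊓ z) (y ⊓ z) :=
  (h _ _ _).mp (le_inf ((h.mul_le_mul le_rfl inf_le_left).trans (h.imp_mul_le x y))
    ((h.mul_le_mul le_rfl inf_le_right).trans (h.mul_le_right htop _ _)))

theorem imp_le_imp_sup (htop : ∀ a : α, a ≤ 1) (x y z : α) :
    imp x y ≤ imp (x ⊔ z) (y ⊔ z) :=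
  (h _ _ _).mp ((h.mul_sup_le _ _ _).trans
    (sup_le_sup (h.imp_mul_le x y) (h.mul_le_right htop _ z)))

theorem imp_le_imp_mul (x y z : α) : imp x y ≤ imp (x * z) (y * z) :=
  (h _ _ _).mp (by rw [← mul_assoc]; exact h.mul_le_mul_right (h.imp_mul_le x y) z)

theorem imp_le_imp_imp_left (x y z : α) : imp x y ≤ imp (imp y z) (imp x z) :=
  (h _ _ _).mp (h.imp_mul_imp_le x y z)

theorem imp_le_imp_imp_right (x y z : α) : imp x y ≤ imp (imp z x) (imp z y) := by
  refine (h _ _ _).mp ((h _ _ _).mp ?_)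
  calc imp x y * imp z x * z = imp x y * (imp z x * z) := mul_assoc _ _ _
    _ ≤ imp x y * x := h.mul_le_mul le_rfl (h.imp_mul_le z x)
    _ ≤ y := h.imp_mul_le x y

theorem one_le_biimp_self (x : α) : 1 ≤ biimp imp x x :=
  le_inf (h.one_le_imp le_rfl) (h.one_le_imp le_rfl)

theorem biimp_mul_biimp_le (x y z : α) : biimp imp x y * biimp imp y z ≤ biimp imp x z := by
  refine le_inf ((h.mul_le_mul inf_le_left inf_le_left).trans (h.imp_mul_imp_le x y z)) ?_
  calc biimp imp x y * biimp imp y z ≤ imp y x * imp z y := h.mul_le_mul inf_le_right inf_le_right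
    _ = imp z y * imp y x := mul_comm _ _
    _ ≤ imp z x := h.imp_mul_imp_le z y x

theorem isCong_exists_pow_biimp_le (htop : ∀ a : α, a ≤ 1) (a b : α) :
    IsCong imp (fun c d => ∃ k : ℕ, biimp imp a b ^ k ≤ biimp imp c d) := by
  refine ⟨⟨fun x => ⟨0, by simpa using h.one_le_biimp_self x⟩, ?_, ?_⟩, ?_, ?_, ?_, ?_, ?_⟩
  · rintro x y ⟨k, hk⟩
    exact ⟨k, biimp_comm (imp := imp) x y ▸ hk⟩
  · rintro x y z ⟨k, hk⟩ ⟨m, hm⟩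
    refine ⟨k + m, ?_⟩
    rw [pow_add]
    exact (h.mul_le_mul hk hm).trans (h.biimp_mul_biimp_le x y z)
  · rintro x y z ⟨k, hk⟩
    exact ⟨k, hk.trans (biimp_le_biimp_of_imp_le (h.imp_le_imp_inf htop · · z) x y)⟩
  · rintro x y z ⟨k, hk⟩
    exact ⟨k, hk.trans (biimp_le_biimp_of_imp_le (h.imp_le_imp_sup htop · · z) x y)⟩
  · rintro x y z ⟨k, hk⟩
    exact ⟨k, hk.trans (biimp_le_biimp_of_imp_le (h.imp_le_imp_mul · · z) x y)⟩
  · rintro x y z ⟨k, hk⟩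
    exact ⟨k, hk.trans
      (biimp_le_biimp_of_imp_le_swap (h.imp_le_imp_imp_left · · z) x y)⟩
  · rintro x y z ⟨k, hk⟩
    exact ⟨k, hk.trans (biimp_le_biimp_of_imp_le (h.imp_le_imp_imp_right · · z) x y)⟩

end IsResiduation

namespace IsCong

variable {α : Type*} [Lattice α] [CommMonoid α] {imp : α → α → α} {r : α → α → Prop}
  (hr : IsCong imp r)
include hr

theorem equivalence : Equivalence r := hr.1

theorem inf_right {x y : α} (hxy : r x y) (z : α) : r (x ⊓ z) (y ⊓ z) := hr.2.1 x y z hxy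

theorem mul_right {x y : α} (hxy : r x y) (z : α) : r (x * z) (y * z) := hr.2.2.2.1 x y z hxy

theorem imp_left {x y : α} (hxy : r x y) (z : α) : r (imp x z) (imp y z) :=
  hr.2.2.2.2.1 x y z hxy

theorem imp_right {x y : α} (hxy : r x y) (z : α) : r (imp z x) (imp z y) :=
  hr.2.2.2.2.2 x y z hxy

theorem pow_rel_one {u : α} (hu : r u 1) (n : ℕ) : r (u ^ n) 1 := by
  induction n with
  | zero => simpa using hr.equivalence.refl 1
  | succ n ih =>
    have step : r (u ^ (n + 1)) (u ^ n) := by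
      simpa [pow_succ, mul_comm] using hr.mul_right hu (u ^ n)
    exact hr.equivalence.trans step ih

theorem biimp_rel_one (hres : IsResiduation imp) (htop : ∀ a : α, a ≤ 1) {x y : α}
    (hxy : r x y) : r (biimp imp x y) 1 := by
  have hxy' : r (imp x y) 1 := by simpa [hres.imp_self_eq_one htop] using hr.imp_left hxy y
  have hyx : r (imp y x) 1 := by simpa [hres.imp_self_eq_one htop] using hr.imp_right hxy y
  have hinf : r (biimp imp x y) (imp y x) := by
    simpa only [biimp, inf_eq_right.mpr (htop (imp y x))] using hr.inf_right hxy' (imp y x)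
  exact hr.equivalence.trans hinf hyx

theorem rel_inf_of_mul_le {u x y : α} (hu : r u 1) (hle : u * x ≤ y) : r x (x ⊓ y) := by
  have hux : r (u * x) x := by simpa using hr.mul_right hu x
  have hinf : r (u * x) (x ⊓ y) := by simpa [inf_eq_left.mpr hle] using hr.inf_right hux y
  exact hr.equivalence.trans (hr.equivalence.symm hux) hinf

theorem rel_of_mul_le {u x y : α} (hu : r u 1) (hxy : u * x ≤ y) (hyx : u * y ≤ x) :
    r x y := by
  have hx := hr.rel_inf_of_mul_le hu hxy
  have hy := hr.rel_inf_of_mul_le hu hyx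
  rw [inf_comm] at hy
  exact hr.equivalence.trans hx (hr.equivalence.symm hy)

end IsCong

theorem idcrl_principal_congruence {α : Type*} [DistribLattice α] [CommMonoid α]
    (htop : ∀ a : α, a ≤ 1)
    (imp : α → α → α)
    (resid : ∀ a b c : α, a * b ≤ c ↔ a ≤ imp b c)
    (a b c d : α) :
    (∀ r : α → α → Prop, IsCong imp r → r a b → r c d) ↔
      (∃ k : ℕ, (biimp imp a b) ^ k ≤ biimp imp c d) := by
  have hres : IsResiduation imp := resid
  constructor
  · intro H
    exact H _ (hres.isCong_exists_pow_biimp_le htop a b) ⟨1, by rw [pow_one]⟩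
  · rintro ⟨k, hk⟩ r hr hab
    have hu : r (biimp imp a b ^ k) 1 := hr.pow_rel_one (hr.biimp_rel_one hres htop hab) k
    exact hr.rel_of_mul_le hu ((resid _ _ _).mpr (hk.trans inf_le_left))
      ((resid _ _ _).mpr (hk.trans inf_le_right))
end
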